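/- Let n ≥ 0 and let M and N be real symmetric (n+1)×(n+1) matrices, with rows and columns indexed by 0, 1, …, n, such that N_{ij} = M_{ij} for all i ≠ j and N_{ii} ≥ M_{ii} for all i. Assume that the n×n principal submatrix of N obtained by deleting row 0 and column 0 is negative definite, and that there exists a vector v ∈ ℝ^{n+1} with vᵀMv > 0. Then (−1)ⁿ·det(N) > 0; that is, det(N) > 0 if n is even and det(N) < 0 if n is odd. -/

import Mathlib

/-!
The quadratic form of `N` dominates that of `M`, so `-N` is not positive semidefinite, while its
block `-D` obtained by deleting row and column `0` is positive definite. By the Schur criterion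
the `1 × 1` Schur complement of `-D` in `-N` is then negative, so
`det (-N) = det (-D) · (Schur complement) < 0`, which is the claimed sign of `det N`.
-/

open Matrix

namespace Matrix

variable {ι : Type*} [Fintype ι]

lemma dotProduct_mulVec_le_of_offDiag_eq_of_diag_le {M N : Matrix ι ι ℝ}
    (hoff : ∀ i j, i ≠ j → N i j = M i j) (hdiag : ∀ i, M i i ≤ N i i) (v : ι → ℝ) :
    v ⬝ᵥ M *ᵥ v ≤ v ⬝ᵥ N *ᵥ v := by
  classical
  have hdiff : N - M = diagonal fun i ↦ N i i - M i i := by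
    ext i j
    obtain rfl | hij := eq_or_ne i j
    · simp
    · simp [hij, hoff i j hij]
  have hpsd : (N - M).PosSemidef := hdiff ▸ .diagonal fun i ↦ sub_nonneg.mpr (hdiag i)
  have := hpsd.dotProduct_mulVec_nonneg v
  rw [star_trivial, sub_mulVec, dotProduct_sub] at this
  linarith

lemma posSemidef_of_unique {o : Type*} [Unique o] {S : Matrix o o ℝ}
    (hS : 0 ≤ S default default) : S.PosSemidef := by
  classical
  have : S = diagonal fun _ ↦ S default default := by
    ext i j
    simp [Subsingleton.elim i default, Subsingleton.elim j default]
  exact this ▸ .diagonal fun _ ↦ hS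

variable [DecidableEq ι]

lemma det_fromBlocks_neg_of_not_posSemidef {A : Matrix ι ι ℝ} (hA : A.PosDef)
    (B : Matrix ι Unit ℝ) (d : Matrix Unit Unit ℝ) (h : ¬(fromBlocks A B Bᴴ d).PosSemidef) :
    (fromBlocks A B Bᴴ d).det < 0 := by
  let := hA.isUnit.invertible
  set S := d - Bᴴ * A⁻¹ * B
  have hS : S () () < 0 := by
    by_contra! hS
    exact h ((hA.fromBlocks₁₁ B d).mpr (posSemidef_of_unique hS))
  rw [det_fromBlocks₁₁, invOf_eq_nonsing_inv, det_unique (n := Unit)]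
  exact mul_neg_of_pos_of_neg hA.det_pos hS

lemma det_neg_of_posDef_submatrix_succ_of_not_posSemidef {n : ℕ}
    {P : Matrix (Fin (n + 1)) (Fin (n + 1)) ℝ} (hP : P.IsHermitian)
    (hD : (P.submatrix Fin.succ Fin.succ).PosDef) (hP' : ¬P.PosSemidef) : P.det < 0 := by
  let e : Fin n ⊕ Unit ≃ Fin (n + 1) :=
    (Equiv.optionEquivSumPUnit (Fin n)).symm.trans (finSuccEquiv n).symm
  have hblocks : P.submatrix e e = fromBlocks (P.submatrix Fin.succ Fin.succ)
      (of fun i _ ↦ P i.succ 0) (of fun i _ ↦ P i.succ 0)ᴴ (of fun _ _ ↦ P 0 0) := by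
    ext (i | _) (j | _) <;> simp [e]
    simpa using hP.apply j.succ 0
  rw [← det_submatrix_equiv_self e, hblocks]
  rw [← posSemidef_submatrix_equiv e, hblocks] at hP'
  exact det_fromBlocks_neg_of_not_posSemidef hD _ _ hP'

end Matrix

theorem det_sign_of_negDef_submatrix_increased_diagonal_general (n : ℕ)
    (M N : Matrix (Fin (n + 1)) (Fin (n + 1)) ℝ)
    (hNsymm : N.IsSymm)
    (hoff : ∀ i j : Fin (n + 1), i ≠ j → N i j = M i j)
    (hdiag : ∀ i : Fin (n + 1), M i i ≤ N i i)
    (hnegdef : ∀ x : Fin n → ℝ, x ≠ 0 →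
      x ⬝ᵥ (N.submatrix Fin.succ Fin.succ).mulVec x < 0)
    (hpos : ∃ v : Fin (n + 1) → ℝ, 0 < v ⬝ᵥ M.mulVec v) :
    0 < (-1 : ℝ) ^ n * N.det := by
  obtain ⟨v, hv⟩ := hpos
  have hNv : 0 < v ⬝ᵥ N *ᵥ v :=
    hv.trans_le (dotProduct_mulVec_le_of_offDiag_eq_of_diag_le hoff hdiag v)
  have hherm : (-N).IsHermitian := (isHermitian_iff_isSymm.mpr hNsymm).neg
  have hD : ((-N).submatrix Fin.succ Fin.succ).PosDef :=
    .of_dotProduct_mulVec_pos (hherm.submatrix _) fun x hx ↦ by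
      simpa [submatrix_neg, neg_mulVec] using hnegdef x hx
  have hnotPSD : ¬(-N).PosSemidef := fun h ↦
    hNv.not_ge (by simpa [neg_mulVec] using h.dotProduct_mulVec_nonneg v)
  have hdet := det_neg_of_posDef_submatrix_succ_of_not_posSemidef hherm hD hnotPSD
  rw [det_neg, Fintype.card_fin, pow_succ] at hdet
  linarith

/-- Let `M`, `N` be real symmetric `(n+1)×(n+1)` matrices agreeing off the
diagonal, with `N` having (weakly) larger diagonal entries.  If the principal submatrix of `N`
obtained by deleting row and column `0` is negative definite, and some vector has positive
`M`-self-intersection, then `(-1)^n * det N > 0`. -/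
theorem det_sign_of_negDef_submatrix_increased_diagonal (n : ℕ)
    (M N : Matrix (Fin (n + 1)) (Fin (n + 1)) ℝ)
    (hMsymm : M.IsSymm) (hNsymm : N.IsSymm)
    (hoff : ∀ i j : Fin (n + 1), i ≠ j → N i j = M i j)
    (hdiag : ∀ i : Fin (n + 1), M i i ≤ N i i)
    (hnegdef : ∀ x : Fin n → ℝ, x ≠ 0 →
      x ⬝ᵥ (N.submatrix Fin.succ Fin.succ).mulVec x < 0)
    (hpos : ∃ v : Fin (n + 1) → ℝ, 0 < v ⬝ᵥ M.mulVec v) :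
    0 < (-1 : ℝ) ^ n * N.det :=
  det_sign_of_negDef_submatrix_increased_diagonal_general n M N hNsymm hoff hdiag hnegdef hpos
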